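/- Let A ∈ ℝ^{n×d} (n, d ≥ 1), λ > 0, q > 0, σ > 0, x* ∈ ℝ^d, and let Σ̂ = (1/n)AᵀA. Let x_PAR and x_ridge be as in Theorem 4.1 (global minimizers of the PAR-regularized and ridge-regularized least-squares objectives with the quadratic-approximating PAR Ψ_q and regularization strength λ). Suppose the ridge excess-risk bound (1/n)‖A(x_ridge − x*)‖² ≤ (λ/2)‖x*‖² + σ²·tr(Σ̂)/(2λn) holds. Then (1/n)‖A(x_PAR − x*)‖² ≤ λ(dq² + ‖x*‖²) + σ²·tr(Σ̂)/(λn). Moreover, if additionally ‖x*‖ + √d·q > 0, tr(Σ̂) > 0, and λ = σ·√(tr(Σ̂)/n) / (‖x*‖ + √d·q), then (1/n)‖A(x_PAR − x*)‖² ≤ 2σ(‖x*‖ + √d·q)·√(tr(Σ̂)/n). -/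

import Mathlib

/-- The piecewise-affine regularizer with quantization values `Q = {0, ±q, ±2q, …}`
that interpolates the quadratic `x²/2` at the grid points: with `k = ⌊|x|/q⌋`,
`Ψ_q(x) = (k + 1/2)·q·(|x| − kq) + k²q²/2`. -/
noncomputable def quadPAR (q : ℝ) (x : ℝ) : ℝ :=
  ((⌊|x| / q⌋₊ : ℝ) + 1 / 2) * q * (|x| - (⌊|x| / q⌋₊ : ℝ) * q) +
    (⌊|x| / q⌋₊ : ℝ) ^ 2 * q ^ 2 / 2

/-!
Writing `f` for the fractional part of `|x|/q`, one has `Ψ_q(x) = x²/2 + q²·f(1 − f)/2`, so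
`x²/2 ≤ Ψ_q(x) ≤ x²/2 + q²/8`. Hence `F_ridge ≤ F_PAR ≤ F_ridge + λdq²/8`, and `x_PAR` is
`λdq²/8`-optimal for `F_ridge`. Comparing `F_ridge(x_ridge)` with the value of the quadratic
`F_ridge` at the midpoint of `x_PAR` and `x_ridge` turns this into
`(1/n)‖A(x_PAR − x_ridge)‖² ≤ λdq²/2`. The first bound follows from `(u + v)² ≤ 2u² + 2v²` and the
ridge bound; the tuned `λ` makes `λ(dq² + ‖x*‖²)` and `σ²tr(Σ̂)/(λn)` each at most
`σ(‖x*‖ + √d·q)·√(tr(Σ̂)/n)`.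
-/

open Finset Matrix

section quadPAR

variable {q : ℝ}

theorem quadPAR_eq (hq : 0 < q) (x : ℝ) :
    quadPAR q x =
      x ^ 2 / 2 + q ^ 2 * (Int.fract (|x| / q) * (1 - Int.fract (|x| / q))) / 2 := by
  have hx : |x| = q * (⌊|x| / q⌋ + Int.fract (|x| / q)) := by
    rw [Int.floor_add_fract, mul_div_cancel₀ _ hq.ne']
  rw [quadPAR, natCast_floor_eq_intCast_floor (by positivity), ← sq_abs x]
  set k : ℝ := (⌊|x| / q⌋ : ℝ)
  set f := Int.fract (|x| / q)
  rw [hx]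
  ring

theorem sq_div_two_le_quadPAR (hq : 0 < q) (x : ℝ) : x ^ 2 / 2 ≤ quadPAR q x := by
  have hf := mul_nonneg (Int.fract_nonneg (|x| / q)) (sub_nonneg.2 (Int.fract_lt_one (|x| / q)).le)
  rw [quadPAR_eq hq]
  exact le_add_of_nonneg_right (div_nonneg (mul_nonneg (sq_nonneg q) hf) zero_le_two)

theorem quadPAR_le (hq : 0 < q) (x : ℝ) : quadPAR q x ≤ x ^ 2 / 2 + q ^ 2 / 8 := by
  rw [quadPAR_eq hq]
  nlinarith [mul_nonneg (sq_nonneg q) (sq_nonneg (Int.fract (|x| / q) - 1 / 2))]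

variable {ι : Type*} [Fintype ι]

theorem sum_sq_div_two_le_sum_quadPAR (hq : 0 < q) (x : ι → ℝ) :
    (∑ i, x i ^ 2) / 2 ≤ ∑ i, quadPAR q (x i) := by
  rw [sum_div]
  exact sum_le_sum fun i _ => sq_div_two_le_quadPAR hq (x i)

theorem sum_quadPAR_le (hq : 0 < q) (x : ι → ℝ) :
    ∑ i, quadPAR q (x i) ≤ (∑ i, x i ^ 2) / 2 + Fintype.card ι * (q ^ 2 / 8) :=
  calc ∑ i, quadPAR q (x i) ≤ ∑ i, (x i ^ 2 / 2 + q ^ 2 / 8) :=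
        sum_le_sum fun i _ => quadPAR_le hq (x i)
    _ = (∑ i, x i ^ 2) / 2 + Fintype.card ι * (q ^ 2 / 8) := by
        rw [sum_add_distrib, sum_div, sum_const, card_univ, nsmul_eq_mul]

end quadPAR

section LeastSquares

variable {ι κ : Type*} [Fintype ι] [Fintype κ]

theorem sum_sq_midpoint (u v : κ → ℝ) :
    ∑ i, ((u i + v i) / 2) ^ 2 =
      (∑ i, u i ^ 2 + ∑ i, v i ^ 2) / 2 - (∑ i, (u i - v i) ^ 2) / 4 := by
  rw [← sum_add_distrib, sum_div, sum_div, ← sum_sub_distrib]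
  exact sum_congr rfl fun i _ => by ring

theorem sum_sq_add_le (u v : κ → ℝ) :
    ∑ i, (u i + v i) ^ 2 ≤ 2 * ∑ i, u i ^ 2 + 2 * ∑ i, v i ^ 2 := by
  rw [mul_sum, mul_sum, ← sum_add_distrib]
  exact sum_le_sum fun i _ => by linarith [add_sq_le (a := u i) (b := v i)]

theorem sum_sq_mulVec_sub_le (A : Matrix κ ι ℝ) (x y z : ι → ℝ) :
    ∑ i, (A *ᵥ (x - z)) i ^ 2 ≤
      2 * ∑ i, (A *ᵥ (x - y)) i ^ 2 + 2 * ∑ i, (A *ᵥ (y - z)) i ^ 2 := by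
  have hsplit : x - z = (x - y) + (y - z) := by abel
  rw [hsplit, mulVec_add]
  exact sum_sq_add_le _ _

theorem mul_sum_sq_mulVec_sub_le_of_forall_le {c μ : ℝ} (hμ : 0 ≤ μ) (A : Matrix κ ι ℝ)
    (b : κ → ℝ) {G : (ι → ℝ) → ℝ}
    (hG : ∀ x, G x = c * ∑ i, ((A *ᵥ x) i - b i) ^ 2 + μ * ∑ j, x j ^ 2)
    {y : ι → ℝ} (hy : ∀ z, G y ≤ G z) (x : ι → ℝ) :
    c * ∑ i, (A *ᵥ (x - y)) i ^ 2 ≤ 2 * (G x - G y) := by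
  -- `G` is a quadratic, so at the midpoint it lies `(c‖A(x - y)‖² + μ‖x - y‖²)/4` below its chord.
  have hmid := hy fun j => (x j + y j) / 2
  have hAmid : ∀ i, (A *ᵥ fun j => (x j + y j) / 2) i - b i =
      (((A *ᵥ x) i - b i) + ((A *ᵥ y) i - b i)) / 2 := fun i => by
    have hlin : (A *ᵥ fun j => (x j + y j) / 2) i = ((A *ᵥ x) i + (A *ᵥ y) i) / 2 := by
      simp only [mulVec, dotProduct]
      rw [← sum_add_distrib, sum_div]
      exact sum_congr rfl fun j _ => by ring
    rw [hlin]; ring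
  have hAsub : ∀ i, (A *ᵥ (x - y)) i = ((A *ᵥ x) i - b i) - ((A *ᵥ y) i - b i) := fun i => by
    rw [mulVec_sub, Pi.sub_apply]; ring
  simp only [hG, hAmid, sum_sq_midpoint] at hmid ⊢
  simp only [hAsub]
  have hμN : 0 ≤ μ * ∑ j, (x j - y j) ^ 2 := mul_nonneg hμ (by positivity)
  linarith

end LeastSquares

theorem mul_add_sq_add_sq_div_le {lam a b s : ℝ} (hlam : 0 < lam) (ha : 0 ≤ a) (hb : 0 ≤ b)
    (hs : lam * (a + b) = s) : lam * (a ^ 2 + b ^ 2) + s ^ 2 / lam ≤ 2 * s * (a + b) := by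
  have hsq : s ^ 2 / lam = lam * (a + b) ^ 2 := by
    rw [← hs]; field_simp
  rw [hsq, ← hs]
  nlinarith [mul_nonneg hlam.le (mul_nonneg ha hb)]

theorem par_excess_risk_general
    (n d : ℕ)
    (A : Matrix (Fin n) (Fin d) ℝ) (b : Fin n → ℝ)
    (lam : ℝ) (hlam : 0 < lam) (q : ℝ) (hq : 0 < q)
    (σ : ℝ) (xstar : Fin d → ℝ)
    (FPAR Fridge : (Fin d → ℝ) → ℝ)
    (hFPAR : ∀ x, FPAR x =
      (1 / (2 * n)) * ∑ i, (A.mulVec x i - b i) ^ 2 + lam * ∑ i, quadPAR q (x i))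
    (hFridge : ∀ x, Fridge x =
      (1 / (2 * n)) * ∑ i, (A.mulVec x i - b i) ^ 2 + (lam / 2) * ∑ i, (x i) ^ 2)
    (xPAR : Fin d → ℝ) (hxPAR : ∀ y, FPAR xPAR ≤ FPAR y)
    (xridge : Fin d → ℝ) (hxridge : ∀ y, Fridge xridge ≤ Fridge y)
    (hridge : (1 / n) * ∑ i, (A.mulVec (xridge - xstar) i) ^ 2 ≤
      (lam / 2) * ∑ i, (xstar i) ^ 2 +
        σ ^ 2 * ((1 / n) * ∑ i, ∑ j, (A i j) ^ 2) / (2 * lam * n)) :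
    (1 / n) * ∑ i, (A.mulVec (xPAR - xstar) i) ^ 2 ≤
      lam * ((d : ℝ) * q ^ 2 + ∑ i, (xstar i) ^ 2) +
        σ ^ 2 * ((1 / n) * ∑ i, ∑ j, (A i j) ^ 2) / (lam * n) ∧
    (0 < Real.sqrt (∑ i, (xstar i) ^ 2) + Real.sqrt d * q →
      0 < (1 / n) * ∑ i, ∑ j, (A i j) ^ 2 →
      lam = σ * Real.sqrt (((1 / n) * ∑ i, ∑ j, (A i j) ^ 2) / n) /
        (Real.sqrt (∑ i, (xstar i) ^ 2) + Real.sqrt d * q) →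
      (1 / n) * ∑ i, (A.mulVec (xPAR - xstar) i) ^ 2 ≤
        2 * σ * (Real.sqrt (∑ i, (xstar i) ^ 2) + Real.sqrt d * q) *
          Real.sqrt (((1 / n) * ∑ i, ∑ j, (A i j) ^ 2) / n)) := by
  have hsandwich : ∀ x, Fridge x ≤ FPAR x ∧ FPAR x ≤ Fridge x + lam * (d * (q ^ 2 / 8)) := by
    intro x
    have hlow := mul_le_mul_of_nonneg_left (sum_sq_div_two_le_sum_quadPAR hq x) hlam.le
    have hup := mul_le_mul_of_nonneg_left (sum_quadPAR_le hq x) hlam.le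
    rw [Fintype.card_fin] at hup
    rw [hFridge, hFPAR]
    constructor <;> linarith
  have hgap : Fridge xPAR - Fridge xridge ≤ lam * (d * (q ^ 2 / 8)) := by
    linarith [(hsandwich xPAR).1, hxPAR xridge, (hsandwich xridge).2]
  have hclose := mul_sum_sq_mulVec_sub_le_of_forall_le (by positivity) A b hFridge hxridge xPAR
  have htri := mul_le_mul_of_nonneg_left (sum_sq_mulVec_sub_le A xPAR xridge xstar)
    (by positivity : (0 : ℝ) ≤ 1 / n)
  have hfirst : (1 / n) * ∑ i, (A.mulVec (xPAR - xstar) i) ^ 2 ≤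
      lam * ((d : ℝ) * q ^ 2 + ∑ i, (xstar i) ^ 2) +
        σ ^ 2 * ((1 / n) * ∑ i, ∑ j, (A i j) ^ 2) / (lam * n) := by
    have hhalf : ∀ t : ℝ, 1 / (2 * (n : ℝ)) * t = 1 / n * t / 2 := fun t => by ring
    have hnoise : ∀ t : ℝ, σ ^ 2 * t / (lam * n) = 2 * (σ ^ 2 * t / (2 * lam * n)) := fun t => by
      ring
    rw [hhalf] at hclose
    rw [hnoise]
    linarith
  refine ⟨hfirst, fun hpos _ hlam_eq => ?_⟩
  have hs := hlam_eq ▸ div_mul_cancel₀ _ hpos.ne'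
  have htuned := mul_add_sq_add_sq_div_le hlam (Real.sqrt_nonneg _) (by positivity) hs
  rw [Real.sq_sqrt (by positivity), mul_pow, Real.sq_sqrt (by positivity), mul_pow,
    Real.sq_sqrt (by positivity)] at htuned
  have hnoise : ∀ t : ℝ, σ ^ 2 * t / (lam * n) = σ ^ 2 * (t / n) / lam := fun t => by ring
  rw [hnoise] at hfirst
  linarith

/-- Theorem 4.2, excess risk of the PAR-regularized solution, explicit:
given the classical ridge excess-risk bound, the PAR excess risk satisfies
`(1/n)‖A(x_PAR − x*)‖² ≤ λ(dq² + ‖x*‖²) + σ²·tr(Σ̂)/(λn)`, and with the optimal choice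
of `λ` it is at most `2σ(‖x*‖ + √d·q)·√(tr(Σ̂)/n)`. Here `tr(Σ̂) = (1/n)∑_{i,j} A i j ²`
is the trace of the sample covariance `Σ̂ = (1/n)AᵀA`. -/
theorem par_excess_risk
    (n d : ℕ) (hn : 0 < n) (hd : 0 < d)
    (A : Matrix (Fin n) (Fin d) ℝ) (b : Fin n → ℝ)
    (lam : ℝ) (hlam : 0 < lam) (q : ℝ) (hq : 0 < q)
    (σ : ℝ) (hσ : 0 < σ) (xstar : Fin d → ℝ)
    (FPAR Fridge : (Fin d → ℝ) → ℝ)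
    (hFPAR : ∀ x, FPAR x =
      (1 / (2 * n)) * ∑ i, (A.mulVec x i - b i) ^ 2 + lam * ∑ i, quadPAR q (x i))
    (hFridge : ∀ x, Fridge x =
      (1 / (2 * n)) * ∑ i, (A.mulVec x i - b i) ^ 2 + (lam / 2) * ∑ i, (x i) ^ 2)
    (xPAR : Fin d → ℝ) (hxPAR : ∀ y, FPAR xPAR ≤ FPAR y)
    (xridge : Fin d → ℝ) (hxridge : ∀ y, Fridge xridge ≤ Fridge y)
    (hridge : (1 / n) * ∑ i, (A.mulVec (xridge - xstar) i) ^ 2 ≤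
      (lam / 2) * ∑ i, (xstar i) ^ 2 +
        σ ^ 2 * ((1 / n) * ∑ i, ∑ j, (A i j) ^ 2) / (2 * lam * n)) :
    (1 / n) * ∑ i, (A.mulVec (xPAR - xstar) i) ^ 2 ≤
      lam * ((d : ℝ) * q ^ 2 + ∑ i, (xstar i) ^ 2) +
        σ ^ 2 * ((1 / n) * ∑ i, ∑ j, (A i j) ^ 2) / (lam * n) ∧
    (0 < Real.sqrt (∑ i, (xstar i) ^ 2) + Real.sqrt d * q →
      0 < (1 / n) * ∑ i, ∑ j, (A i j) ^ 2 →
      lam = σ * Real.sqrt (((1 / n) * ∑ i, ∑ j, (A i j) ^ 2) / n) /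
        (Real.sqrt (∑ i, (xstar i) ^ 2) + Real.sqrt d * q) →
      (1 / n) * ∑ i, (A.mulVec (xPAR - xstar) i) ^ 2 ≤
        2 * σ * (Real.sqrt (∑ i, (xstar i) ^ 2) + Real.sqrt d * q) *
          Real.sqrt (((1 / n) * ∑ i, ∑ j, (A i j) ^ 2) / n)) :=
  par_excess_risk_general n d A b lam hlam q hq σ xstar FPAR Fridge hFPAR hFridge xPAR hxPAR xridge
    hxridge hridge
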